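/- Let n*, ℓ*, d ∈ ℕ, let ℓ ≥ 1, and let g : ℕ → ℕ → ℕ satisfy: (i) g(i, n) = 0 whenever i < n*, or n < i, or n > i + d; (ii) g(i + ℓ, n + ℓ) = g(i, n) for all i ≥ n* + ℓ* and all n. Define F(n) = Σ_{i=n*}^{n} g(i, n). Then F(n + ℓ) = F(n) for every n ≥ n* + ℓ* + d. -/

import Mathlib

/-!
Layer `n + ℓ` is layer `n` shifted by one period. A branch `B(i)` meeting layer `n + ℓ` has
`i ≥ n + ℓ - d ≥ n* + ℓ* + ℓ`, so it is the translate of `B(i - ℓ)`, a branch meeting layer `n`;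
conversely, branches rooted in the pre-period reach neither layer `n` nor, translated, layer `n + ℓ`.
-/

open Finset

theorem Finset.sum_Icc_eq_sum_Icc_of_eq_zero {M : Type*} [AddCommMonoid M] (f : ℕ → M)
    {a b c : ℕ} (hac : a ≤ c) (hf : ∀ i, a ≤ i → i < c → f i = 0) :
    ∑ i ∈ Icc a b, f i = ∑ i ∈ Icc c b, f i := by
  refine (sum_subset (Icc_subset_Icc_left hac) fun i hi hic => ?_).symm
  simp only [mem_Icc] at hi hic
  exact hf i hi.1 (by omega)

section BranchPeriodicity

variable {g : ℕ → ℕ → ℕ} {nstar lstar d ℓ : ℕ}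

theorem branch_add_period_eq (hdepth : ∀ i n : ℕ, i + d < n → g i n = 0)
    (hper : ∀ i n : ℕ, nstar + lstar ≤ i → g (i + ℓ) (n + ℓ) = g i n)
    {n : ℕ} (hn : nstar + lstar + d ≤ n) (i : ℕ) : g (i + ℓ) (n + ℓ) = g i n := by
  by_cases hi : nstar + lstar ≤ i
  · exact hper i n hi
  · rw [hdepth i n (by omega), hdepth (i + ℓ) (n + ℓ) (by omega)]

theorem layer_sum_add_period_eq (hdepth : ∀ i n : ℕ, i + d < n → g i n = 0)
    (hper : ∀ i n : ℕ, nstar + lstar ≤ i → g (i + ℓ) (n + ℓ) = g i n)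
    {n : ℕ} (hn : nstar + lstar + d ≤ n) :
    ∑ i ∈ Icc nstar (n + ℓ), g i (n + ℓ) = ∑ i ∈ Icc nstar n, g i n := calc
  ∑ i ∈ Icc nstar (n + ℓ), g i (n + ℓ) = ∑ i ∈ Icc (nstar + ℓ) (n + ℓ), g i (n + ℓ) :=
    sum_Icc_eq_sum_Icc_of_eq_zero _ (Nat.le_add_right _ _)
      fun i _ hi => hdepth i (n + ℓ) (by omega)
  _ = ∑ i ∈ Icc nstar n, g (i + ℓ) (n + ℓ) := by rw [← map_add_right_Icc, sum_map]; rfl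
  _ = ∑ i ∈ Icc nstar n, g i n :=
    sum_congr rfl fun i _ => branch_add_period_eq hdepth hper hn i

end BranchPeriodicity

theorem stmt3_general (nstar lstar d ℓ : ℕ) (g : ℕ → ℕ → ℕ)
    (h0 : ∀ i n : ℕ, (i < nstar ∨ n < i ∨ i + d < n) → g i n = 0)
    (hper : ∀ i n : ℕ, nstar + lstar ≤ i → g (i + ℓ) (n + ℓ) = g i n)
    (F : ℕ → ℕ) (hF : ∀ n : ℕ, F n = ∑ i ∈ Finset.Icc nstar n, g i n) :
    ∀ n : ℕ, nstar + lstar + d ≤ n → F (n + ℓ) = F n := by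
  intro n hn
  rw [hF, hF]
  exact layer_sum_add_period_eq (fun i n h => h0 i n (Or.inr (Or.inr h))) hper hn

/-- Periodicity of tree layer cardinalities: if the branch layer counts `g`
vanish outside the window and are periodic with period `ℓ` from the periodic
root on, then the tree layer cardinality `F n = Σ_{i=n*}^{n} g i n` satisfies
`F (n + ℓ) = F n` for all `n ≥ n* + ℓ* + d`. -/
theorem stmt3 (nstar lstar d ℓ : ℕ) (hℓ : 1 ≤ ℓ) (g : ℕ → ℕ → ℕ)
    (h0 : ∀ i n : ℕ, (i < nstar ∨ n < i ∨ i + d < n) → g i n = 0)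
    (hper : ∀ i n : ℕ, nstar + lstar ≤ i → g (i + ℓ) (n + ℓ) = g i n)
    (F : ℕ → ℕ) (hF : ∀ n : ℕ, F n = ∑ i ∈ Finset.Icc nstar n, g i n) :
    ∀ n : ℕ, nstar + lstar + d ≤ n → F (n + ℓ) = F n :=
  stmt3_general nstar lstar d ℓ g h0 hper F hF
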